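/- arXiv:1908.06026 — 3 statements merged into one kernel-verified Lean document; each statement's English description precedes it below -/
import Mathlib

section
/- The class 𝓔 is closed under composition: if F, G ∈ 𝓔, then F ∘ G ∈ 𝓔. -/
/-- The class `𝓔`: entire functions admitting an infinite exponential tower
`Fₙ = λ_{n+1}·e^{F_{n+1}}`. -/
def InE (F₀ : ℂ → ℂ) : Prop :=
  ∃ (F : ℕ → ℂ → ℂ) (l : ℕ → ℂ),
    F 0 = F₀ ∧ (∀ n, Differentiable ℂ (F n)) ∧
    ∀ n z, F n z = l (n + 1) * Complex.exp (F (n + 1) z)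

theorem InE.differentiable {F : ℂ → ℂ} (hF : InE F) : Differentiable ℂ F := by
  obtain ⟨Fn, -, rfl, hFn, -⟩ := hF
  exact hFn 0

theorem InE.comp_differentiable {F G : ℂ → ℂ} (hF : InE F) (hG : Differentiable ℂ G) :
    InE (F ∘ G) := by
  obtain ⟨Fn, l, rfl, hFn, hrec⟩ := hF
  exact ⟨fun n => Fn n ∘ G, l, rfl, fun n => (hFn n).comp hG, fun n z => hrec n (G z)⟩

/-- the class `𝓔` is closed under composition. -/
theorem inE_comp (F G : ℂ → ℂ) (hF : InE F) (hG : InE G) : InE (F ∘ G) :=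
  hF.comp_differentiable hG.differentiable
end

section
/- Every function in the closure of 𝓔 (in the topology of uniform convergence on compact sets) that is non-constant is nowhere vanishing: if g is a non-constant entire function vanishing at some z₀ and (fₙ) ⊂ 𝓔 converges to g uniformly on compacts, a contradiction arises via Rouché's theorem. -/
/-! A non-constant entire `g` with `g z₀ = 0` is bounded below by some `m > 0` on a small circle
around `z₀`, because its zeros are isolated. A member `f` of `𝓔` that is `m / 2`-close to `g` on
the closed disc is either identically zero, impossible on the circle, or zero-free; then the
minimum modulus principle (the maximum modulus principle for `1 / f`) gives
`m / 2 ≤ ‖f z₀‖ = ‖f z₀ - g z₀‖ < m / 2`. -/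

open Filter

open Metric Topology

theorem InE.differentiable_s15 {f : ℂ → ℂ} (h : InE f) : Differentiable ℂ f := by
  obtain ⟨F, -, rfl, hdiff, -⟩ := h
  exact hdiff 0

theorem InE.eq_zero_or_forall_ne_zero {f : ℂ → ℂ} (h : InE f) :
    (∀ z, f z = 0) ∨ ∀ z, f z ≠ 0 := by
  obtain ⟨F, l, rfl, -, htower⟩ := h
  simp only [htower 0]
  by_cases hl : l 1 = 0
  · exact .inl fun z ↦ by simp [hl]
  · exact .inr fun z ↦ mul_ne_zero hl (Complex.exp_ne_zero _)

theorem exists_sphere_forall_ne_zero_of_not_const {g : ℂ → ℂ} (hg : Differentiable ℂ g)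
    (hnc : ¬ ∃ c, ∀ z, g z = c) (z₀ : ℂ) : ∃ r > 0, ∀ z ∈ sphere z₀ r, g z ≠ 0 := by
  have hne : ∀ᶠ z in 𝓝[≠] z₀, g z ≠ 0 := by
    refine (hg.analyticAt z₀).eventually_eq_zero_or_eventually_ne_zero.resolve_left fun h ↦ ?_
    have hzero := (Complex.analyticOnNhd_univ_iff_differentiable.mpr hg)
      |>.eqOn_zero_of_preconnected_of_eventuallyEq_zero isPreconnected_univ (Set.mem_univ z₀) h
    exact hnc ⟨0, fun z ↦ hzero (Set.mem_univ z)⟩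
  obtain ⟨ε, hε, hball⟩ := Metric.eventually_nhds_iff.mp (eventually_nhdsWithin_iff.mp hne)
  refine ⟨ε / 2, half_pos hε, fun z hz ↦ hball ?_ ?_⟩
  · rw [mem_sphere.mp hz]
    exact half_lt_self hε
  · rintro rfl
    simp only [mem_sphere, dist_self] at hz
    linarith

section MinimumModulus

variable {E : Type*} [NormedAddCommGroup E] [NormedSpace ℂ E] [Nontrivial E]

theorem le_norm_center_of_forall_mem_sphere_le_norm {f : E → ℂ} {z₀ : E} {r c : ℝ} (hr : 0 < r)
    (hf : DiffContOnCl ℂ f (ball z₀ r)) (hf0 : ∀ z ∈ closedBall z₀ r, f z ≠ 0)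
    (hc : ∀ z ∈ sphere z₀ r, c ≤ ‖f z‖) : c ≤ ‖f z₀‖ := by
  rcases le_or_gt c 0 with hc0 | hc0
  · exact hc0.trans (norm_nonneg _)
  have hf0' : ∀ z ∈ closure (ball z₀ r), f z ≠ 0 := by
    rwa [closure_ball z₀ hr.ne']
  have hinv : DiffContOnCl ℂ (fun z ↦ (f z)⁻¹) (ball z₀ r) :=
    ⟨hf.differentiableOn.inv fun z hz ↦ hf0' z (subset_closure hz), hf.continuousOn.inv₀ hf0'⟩
  have hmax : ‖(f z₀)⁻¹‖ ≤ c⁻¹ := by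
    refine Complex.norm_le_of_forall_mem_frontier_norm_le isBounded_ball hinv (fun z hz ↦ ?_)
      (subset_closure (mem_ball_self hr))
    rw [frontier_ball z₀ hr.ne'] at hz
    rw [norm_inv]
    exact inv_anti₀ hc0 (hc z hz)
  rw [norm_inv] at hmax
  exact (inv_le_inv₀ (norm_pos_iff.mpr (hf0 z₀ (mem_closedBall_self hr.le))) hc0).mp hmax

theorem apply_ne_zero_of_forall_norm_sub_lt {f g : E → ℂ} {z₀ : E} {r ε : ℝ} (hr : 0 < r)
    (hf : DiffContOnCl ℂ f (ball z₀ r)) (hf0 : ∀ z ∈ closedBall z₀ r, f z ≠ 0)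
    (hfg : ∀ z ∈ closedBall z₀ r, ‖f z - g z‖ < ε) (hg : ∀ z ∈ sphere z₀ r, 2 * ε ≤ ‖g z‖) :
    g z₀ ≠ 0 := by
  intro hz₀
  have hfε : ∀ z ∈ sphere z₀ r, ε ≤ ‖f z‖ := fun z hz ↦ by
    have := hfg z (sphere_subset_closedBall hz)
    have := norm_sub_norm_le (g z) (f z)
    rw [norm_sub_rev] at this
    linarith [hg z hz]
  have hcenter := hfg z₀ (mem_closedBall_self hr.le)
  rw [hz₀, sub_zero] at hcenter
  exact (le_norm_center_of_forall_mem_sphere_le_norm hr hf hf0 hfε).not_gt hcenter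

end MinimumModulus

/-- a non-constant entire function in the closure of `𝓔` (uniform convergence
on compacts) vanishing at some point yields a contradiction (via Rouché's theorem);
i.e. non-constant limits of functions of `𝓔` are nowhere vanishing. -/
theorem closure_E_nonconstant_nonvanishing
    (g : ℂ → ℂ) (hg : Differentiable ℂ g)
    (hnc : ¬ ∃ c : ℂ, ∀ z, g z = c)
    (f : ℕ → ℂ → ℂ) (hf : ∀ n, InE (f n))
    (hconv : TendstoLocallyUniformly f g atTop)
    (z₀ : ℂ) (hz₀ : g z₀ = 0) : False := by
  obtain ⟨r, hr, hsphere⟩ := exists_sphere_forall_ne_zero_of_not_const hg hnc z₀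
  obtain ⟨m, hm, hgm⟩ := (isCompact_sphere z₀ r).exists_forall_le' hg.continuous.norm.continuousOn
    fun z hz ↦ norm_pos_iff.mpr (hsphere z hz)
  have hunif : TendstoUniformlyOn f g atTop (closedBall z₀ r) :=
    tendstoLocallyUniformly_iff_forall_isCompact.mp hconv _ (isCompact_closedBall z₀ r)
  obtain ⟨n, hn⟩ := (Metric.tendstoUniformlyOn_iff.mp hunif (m / 2) (half_pos hm)).exists
  have hclose : ∀ z ∈ closedBall z₀ r, ‖f n z - g z‖ < m / 2 := fun z hz ↦ by
    simpa only [dist_eq_norm'] using hn z hz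
  rcases (hf n).eq_zero_or_forall_ne_zero with hzero | hne
  · obtain ⟨w, hw⟩ := (NormedSpace.sphere_nonempty (x := z₀)).mpr hr.le
    have := hclose w (sphere_subset_closedBall hw)
    rw [hzero w, zero_sub, norm_neg] at this
    linarith [hgm w hw]
  · exact apply_ne_zero_of_forall_norm_sub_lt hr (hf n).differentiable_s15.diffContOnCl
      (fun z _ ↦ hne z) hclose (fun z hz ↦ by linarith [hgm z hz]) hz₀
end

section
/- Every non-vanishing entire function is a limit, uniform on compact subsets of ℂ, of a sequence of functions from the class 𝓔; together with the constants this shows the closure of 𝓔 equals 𝒪*(ℂ) ∪ {0}, assuming that for every ε > 0 and compact K there exists f ∈ 𝓔 with |f(z) − e^z| ≤ ε on K. -/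
open Filter

lemma InE.comp {f h : ℂ → ℂ} (hf : InE f) (hh : Differentiable ℂ h) : InE (f ∘ h) := by
  obtain ⟨F, l, hF₀, hF, hFl⟩ := hf
  exact ⟨fun n => F n ∘ h, l, hF₀ ▸ rfl, fun n => (hF n).comp hh, fun n z => hFl n (h z)⟩

theorem Differentiable.exists_exp_comp_eq {g : ℂ → ℂ} (hg : Differentiable ℂ g)
    (hne : ∀ z, g z ≠ 0) :
    ∃ h : ℂ → ℂ, Differentiable ℂ h ∧ ∀ z, Complex.exp (h z) = g z := by
  have hg' : Differentiable ℂ (_root_.deriv g) := fun z => (hg.analyticAt z).deriv.differentiableAt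
  obtain ⟨h, hh₀, hh⟩ :=
    (hg'.div hg hne).isExactOn_univ.with_val_at 0 (Complex.log (g 0))
  replace hh : ∀ z, HasDerivAt h (_root_.deriv g z / g z) z := fun z => hh z trivial
  have hquot : ∀ z, HasDerivAt (fun w => g w * Complex.exp (-h w)) 0 z := by
    intro z
    refine ((hg z).hasDerivAt.mul (hh z).neg.cexp).congr_deriv ?_
    field_simp [hne z]
    ring
  have hconst : ∀ z, g z * Complex.exp (-h z) = 1 := by
    intro z
    rw [is_const_of_deriv_eq_zero (fun w => (hquot w).differentiableAt)
      (fun w => (hquot w).deriv) z 0, hh₀, Complex.exp_neg, Complex.exp_log (hne 0),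
      mul_inv_cancel₀ (hne 0)]
  refine ⟨h, fun z => (hh z).differentiableAt, fun z => ?_⟩
  have hz := hconst z
  rw [Complex.exp_neg, mul_inv_eq_one₀ (Complex.exp_ne_zero _)] at hz
  exact hz.symm

lemma exists_seq_tendstoLocallyUniformly_of_forall_isCompact_approx {X Y : Type*}
    [TopologicalSpace X] [WeaklyLocallyCompactSpace X] [SigmaCompactSpace X]
    [PseudoMetricSpace Y] {P : (X → Y) → Prop} {φ : X → Y}
    (happrox : ∀ ε > (0 : ℝ), ∀ K : Set X, IsCompact K →
      ∃ f, P f ∧ ∀ x ∈ K, dist (f x) (φ x) ≤ ε) :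
    ∃ f : ℕ → X → Y, (∀ n, P (f n)) ∧ TendstoLocallyUniformly f φ atTop := by
  let K := CompactExhaustion.choice X
  choose f hfP hfK using fun n : ℕ =>
    happrox (1 / (n + 1)) (by positivity) (K n) (K.isCompact n)
  refine ⟨f, hfP, Metric.tendstoLocallyUniformly_iff.2 fun ε hε x => ?_⟩
  obtain ⟨m, hm⟩ := K.exists_mem_nhds x
  obtain ⟨N, hN⟩ := exists_nat_one_div_lt hε
  refine ⟨K m, hm, ?_⟩
  filter_upwards [eventually_ge_atTop (max m N)] with n hn y hy
  calc dist (φ y) (f n y) = dist (f n y) (φ y) := dist_comm _ _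
    _ ≤ 1 / (n + 1) := hfK n y (K.subset (le_of_max_le_left hn) hy)
    _ ≤ 1 / (N + 1) := by gcongr; exact le_of_max_le_right hn
    _ < ε := hN

/-- assuming `e^z` can be approximated on compacts by functions of `𝓔`
(Theorem 1 of the paper), every non-vanishing entire function is a limit, uniform on
compact subsets of `ℂ`, of a sequence of functions of `𝓔`. -/
theorem closure_E_contains_nonvanishing
    (happrox : ∀ ε > (0 : ℝ), ∀ K : Set ℂ, IsCompact K →
      ∃ f : ℂ → ℂ, InE f ∧ ∀ z ∈ K, ‖f z - Complex.exp z‖ ≤ ε)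
    (g : ℂ → ℂ) (hg : Differentiable ℂ g) (hne : ∀ z, g z ≠ 0) :
    ∃ f : ℕ → ℂ → ℂ, (∀ n, InE (f n)) ∧ TendstoLocallyUniformly f g atTop := by
  obtain ⟨f, hfE, hf⟩ := exists_seq_tendstoLocallyUniformly_of_forall_isCompact_approx
    (P := InE) (φ := Complex.exp) fun ε hε K hK => by
      simpa only [dist_eq_norm] using happrox ε hε K hK
  obtain ⟨h, hh, hgh⟩ := hg.exists_exp_comp_eq hne
  refine ⟨fun n => f n ∘ h, fun n => (hfE n).comp hh, ?_⟩
  simpa only [show Complex.exp ∘ h = g from funext hgh] using hf.comp h hh.continuous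
end
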